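/- arXiv:0903.1344 — 7 statements merged into one kernel-verified Lean document; each statement's English description precedes it below -/
import Mathlib

section
/- Define the rational sequence x_0 = 1 and x_{n+1} = x_n^2 / (2 x_n + 1). Then x_n = 1 / (F_n - 2) for every n ≥ 0, where F_n = 2^(2^n) + 1 is the n-th Fermat number. -/
/-! Writing `x = 1 / a`, the step `x ↦ x ^ 2 / (2 * x + 1)` becomes `a ↦ a * (a + 2)`, and
`F n - 2` obeys the same recursion because `F (n + 1) - 2 = (F n - 2) * F n`. -/

/-- The n-th Fermat number, as an integer. -/
def fermatNum (n : ℕ) : ℤ := 2 ^ (2 ^ n) + 1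

theorem fermatNum_succ_sub_two (n : ℕ) :
    fermatNum (n + 1) - 2 = (fermatNum n - 2) * fermatNum n := by
  rw [fermatNum, fermatNum, pow_succ, pow_mul]
  ring

theorem one_div_sq_div_two_mul_one_div_add_one {K : Type*} [Field K] (a : K) :
    (1 / a) ^ 2 / (2 * (1 / a) + 1) = 1 / (a * (a + 2)) := by
  rcases eq_or_ne a 0 with rfl | ha
  · simp
  have hden : 2 * (1 / a) + 1 = (a + 2) * (1 / a) := by field_simp; ring
  rw [hden, sq, mul_div_mul_right _ _ (one_div_ne_zero ha), div_div]

theorem seq_eq_inv_fermat_sub_two (x : ℕ → ℚ) (hx0 : x 0 = 1)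
    (hrec : ∀ n, x (n + 1) = (x n) ^ 2 / (2 * x n + 1)) :
    ∀ n, x n = 1 / ((fermatNum n : ℚ) - 2) := by
  intro n
  induction n with
  | zero => norm_num [hx0, fermatNum]
  | succ n ih =>
    rw [hrec, ih, one_div_sq_div_two_mul_one_div_add_one, sub_add_cancel]
    congr 1
    exact_mod_cast (fermatNum_succ_sub_two n).symm
end

section
/- Define x_0 = 1 and x_{n+1} = x_n^2 / (2 x_n + 1) in the rationals. Then x_{n+1} - x_n = - 2^(2^n) / (F_{n+1} - 2) for every n ≥ 0, so the numerator of x_{n+1} - x_n (in lowest terms) is a power of 2 up to sign. -/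
/-!
The substitution `y = x⁻¹ + 1` linearises the recursion into squaring: `y_{n+1} = y_n ^ 2`,
so `x_n = (2 ^ 2 ^ n - 1)⁻¹` and `x_{n+1} - x_n = -a / (a ^ 2 - 1)` with `a = 2 ^ 2 ^ n`.
The denominator is odd, so this fraction is already in lowest terms.
-/

-- Both sides equal `1` at the junk points `x = 0` and `2 * x + 1 = 0`.
lemma inv_div_two_mul_add_one_add_one {K : Type*} [Field K] (x : K) :
    (x ^ 2 / (2 * x + 1))⁻¹ + 1 = (x⁻¹ + 1) ^ 2 := by
  rcases eq_or_ne x 0 with rfl | hx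
  · simp
  rw [inv_div]
  field_simp
  ring

lemma inv_add_one_eq_two_pow_two_pow {K : Type*} [Field K] (x : ℕ → K) (hx0 : x 0 = 1)
    (hrec : ∀ n, x (n + 1) = x n ^ 2 / (2 * x n + 1)) (n : ℕ) :
    (x n)⁻¹ + 1 = 2 ^ 2 ^ n := by
  induction n with
  | zero => rw [hx0]; norm_num
  | succ n ih => rw [hrec, inv_div_two_mul_add_one_add_one, ih, ← pow_mul, ← pow_succ]

lemma inv_sub_one_sq_sub_inv_sub_one {K : Type*} [Field K] {a : K} (ha : a + 1 ≠ 0) :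
    (a ^ 2 - 1)⁻¹ - (a - 1)⁻¹ = -a / (a ^ 2 - 1) := by
  rcases eq_or_ne (a - 1) 0 with ha' | ha'
  · simp [sub_eq_zero.mp ha']
  have hsq : a ^ 2 - 1 = (a - 1) * (a + 1) := by ring
  rw [hsq]
  field_simp
  ring

lemma num_neg_two_pow_div_of_odd (k : ℕ) {d : ℤ} (hd : 0 < d) (hodd : Odd d) :
    ((-(2 ^ k) : ℚ) / d).num = -(2 ^ k) := by
  have hcop : Nat.Coprime (-(2 ^ k) : ℤ).natAbs d.natAbs := by
    rw [Int.natAbs_neg, Int.natAbs_pow]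
    exact Nat.Coprime.pow_left _ (Int.natAbs_odd.mpr hodd).coprime_two_left
  exact_mod_cast Rat.num_div_eq_of_coprime hd hcop

theorem seq_difference_power_of_two (x : ℕ → ℚ) (hx0 : x 0 = 1)
    (hrec : ∀ n, x (n + 1) = (x n) ^ 2 / (2 * x n + 1)) :
    ∀ n, x (n + 1) - x n = -(2 ^ (2 ^ n)) / ((fermatNum (n + 1) : ℚ) - 2) ∧
      ∃ k : ℕ, (x (n + 1) - x n).num = -(2 ^ k) := by
  intro n
  have hclosed (m : ℕ) : x m = ((2 : ℚ) ^ 2 ^ m - 1)⁻¹ := by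
    rw [← inv_add_one_eq_two_pow_two_pow x hx0 hrec m, add_sub_cancel_right, inv_inv]
  have hfermat : (fermatNum (n + 1) : ℚ) - 2 = ((2 : ℚ) ^ 2 ^ n) ^ 2 - 1 := by
    rw [fermatNum, pow_succ, pow_mul]; push_cast; ring
  have hdiff : x (n + 1) - x n = -(2 ^ 2 ^ n) / ((fermatNum (n + 1) : ℚ) - 2) := by
    rw [hclosed, hclosed, hfermat, pow_succ, pow_mul]
    exact inv_sub_one_sq_sub_inv_sub_one (by positivity)
  refine ⟨hdiff, 2 ^ n, ?_⟩
  have hpos : (0 : ℤ) < fermatNum (n + 1) - 2 := by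
    rw [fermatNum]; linarith [one_lt_pow₀ (one_lt_two : (1 : ℤ) < 2) (pow_ne_zero (n + 1) two_ne_zero)]
  have hodd : Odd (fermatNum (n + 1) - 2) := by
    rw [fermatNum, add_sub_assoc]
    exact (Int.even_pow.mpr ⟨even_two, by positivity⟩).add_odd (by decide)
  rw [hdiff]
  exact_mod_cast num_neg_two_pow_div_of_odd (2 ^ n) hpos hodd
end

section
/- Define x_0 = 1 and x_{n+1} = x_n^2 / (x_n + 1) in the rationals, and let E_n be the Euclid numbers (E_0 = 2, E_{n+1} = E_n^2 - E_n + 1). Then x_n = 1 / (E_n - 1) and x_{n+1} - x_n = -1 / E_n for every n ≥ 0. -/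
/-! The map x ↦ x² / (x + 1) sends 1 / (e - 1) to 1 / (e (e - 1)), and e (e - 1) = e' - 1 for the
next Euclid number e' = e² - e + 1; the step is then 1 / (e (e - 1)) - 1 / (e - 1) = -1 / e. -/

/-- The n-th Euclid number. -/
def euclidNum : ℕ → ℤ
  | 0 => 2
  | n + 1 => (euclidNum n) ^ 2 - euclidNum n + 1

theorem two_le_euclidNum : ∀ n, 2 ≤ euclidNum n
  | 0 => le_rfl
  | n + 1 => by
    have h := two_le_euclidNum n
    rw [euclidNum]
    nlinarith

theorem euclidNum_succ_sub_one (n : ℕ) :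
    euclidNum (n + 1) - 1 = euclidNum n * (euclidNum n - 1) := by
  rw [euclidNum]
  ring

section Field

variable {K : Type*} [Field K] {e : K}

theorem one_div_sub_one_sq_div_add_one (he : e ≠ 0) (he1 : e - 1 ≠ 0) :
    (1 / (e - 1)) ^ 2 / (1 / (e - 1) + 1) = 1 / (e * (e - 1)) := by
  have hsum : 1 / (e - 1) + 1 = e / (e - 1) := by
    field_simp
    ring
  rw [hsum]
  field_simp

theorem one_div_mul_sub_one_sub_one_div_sub_one (he : e ≠ 0) (he1 : e - 1 ≠ 0) :
    1 / (e * (e - 1)) - 1 / (e - 1) = -1 / e := by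
  field_simp
  ring

end Field

theorem seq_euclid (x : ℕ → ℚ) (hx0 : x 0 = 1)
    (hrec : ∀ n, x (n + 1) = (x n) ^ 2 / (x n + 1)) :
    ∀ n, x n = 1 / ((euclidNum n : ℚ) - 1) ∧
      x (n + 1) - x n = -1 / (euclidNum n : ℚ) := by
  have hE : ∀ n, (euclidNum n : ℚ) ≠ 0 ∧ (euclidNum n : ℚ) - 1 ≠ 0 := fun n => by
    have : (2 : ℚ) ≤ euclidNum n := by exact_mod_cast two_le_euclidNum n
    constructor <;> linarith
  have hsucc : ∀ n, ((euclidNum (n + 1) : ℚ) - 1) = euclidNum n * (euclidNum n - 1) := fun n => by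
    exact_mod_cast euclidNum_succ_sub_one n
  have hx : ∀ n, x n = 1 / ((euclidNum n : ℚ) - 1) := by
    intro n
    induction n with
    | zero => rw [hx0, euclidNum]; norm_num
    | succ n ih =>
      rw [hrec, ih, hsucc, one_div_sub_one_sq_div_add_one (hE n).1 (hE n).2]
  intro n
  refine ⟨hx n, ?_⟩
  rw [hx, hx, hsucc, one_div_mul_sub_one_sub_one_div_sub_one (hE n).1 (hE n).2]
end

section
/- Let X, Y be coprime homogeneous polynomials in ℂ[x,y] of the same degree D ≥ 1, and let α, β, γ be three distinct complex numbers. Then the product (X - αY)(X - βY)(X - γY) has at least D + 2 distinct linear factors over ℂ. -/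
/-!
Dehomogenizing, the identity `(β - γ)(X - αY) + (γ - α)(X - βY) + (α - β)(X - γY) = 0` becomes a
relation `a + b + c = 0` between coprime polynomials, and Mason–Stothers shows that `a b c` has at
least `deg b + 1` distinct roots. After a linear change of coordinates moving a zero of `X - αY` to
the point at infinity `(1 : 0)`, the form `X - βY` does not vanish there, so `deg b = D`, and the
point at infinity is a `(D + 2)`-nd zero. A zero `p ≠ 0` of a binary form gives its linear factor
`p₁X₀ - p₀X₁`, and distinct points of `ℙ¹` give non-proportional factors.
-/

open MvPolynomial

open UniqueFactorizationMonoid in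
theorem Polynomial.natDegree_radical_le_card_roots_toFinset {K : Type*} [Field K] [DecidableEq K]
    [IsAlgClosed K] {P : Polynomial K} (hP : P ≠ 0) :
    (radical P).natDegree ≤ P.roots.toFinset.card := by
  have hnodup : (radical P).roots.Nodup :=
    Polynomial.nodup_roots (PerfectField.separable_iff_squarefree.mpr squarefree_radical)
  rw [← IsAlgClosed.card_roots_eq_natDegree, ← Multiset.toFinset_card_of_nodup hnodup]
  exact Finset.card_le_card (Multiset.toFinset_subset.mpr
    (Multiset.subset_of_le (Polynomial.roots.le_of_dvd hP radical_dvd_self)))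

theorem Polynomial.eval_one_zero_homogenize {R : Type*} [CommSemiring R] (q : Polynomial R)
    (n : ℕ) : MvPolynomial.eval ![1, 0] (q.homogenize n) = q.coeff n := by
  rw [homogenize, map_sum, Finset.sum_eq_single (n, 0)]
  · simp [MvPolynomial.eval_monomial, Finsupp.prod_fintype]
  · rintro ⟨k, l⟩ hkl hne
    have hl : l ≠ 0 := by
      rintro rfl
      simp_all
    simp [MvPolynomial.eval_monomial, hl]
  · simp

namespace MvPolynomial

theorem IsHomogeneous.aeval_mul {R S σ : Type*} [CommSemiring R] [CommSemiring S] [Algebra R S]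
    {φ : MvPolynomial σ R} {n : ℕ} (hφ : φ.IsHomogeneous n) (s : S) (g : σ → S) :
    MvPolynomial.aeval (fun i => s * g i) φ = s ^ n * MvPolynomial.aeval g φ := by
  rw [φ.as_sum, map_sum, map_sum, Finset.mul_sum]
  refine Finset.sum_congr rfl fun d hd => ?_
  simp only [aeval_monomial, mul_pow, Finsupp.prod_mul]
  rw [← hφ (mem_support_iff.mp hd)]
  simp only [Finsupp.prod, Finset.prod_pow_eq_pow_sum, Finsupp.weight_apply, Finsupp.sum,
    Pi.one_apply, smul_eq_mul, mul_one]
  ring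

variable {K σ : Type*} [Field K]

def HasProjectiveZeros (H : MvPolynomial σ K) (n : ℕ) : Prop :=
  ∃ Z : Finset (σ → K), n ≤ Z.card ∧ (∀ p ∈ Z, p ≠ 0 ∧ eval p H = 0) ∧
    ∀ p ∈ Z, ∀ q ∈ Z, p ≠ q → ∀ z : K, p ≠ z • q

theorem HasProjectiveZeros.mono {H H' : MvPolynomial σ K} {n : ℕ}
    (hzero : ∀ p, eval p H = 0 → eval p H' = 0) (h : HasProjectiveZeros H n) :
    HasProjectiveZeros H' n := by
  obtain ⟨Z, hcard, hZ, hpair⟩ := h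
  exact ⟨Z, hcard, fun p hp => ⟨(hZ p hp).1, hzero p (hZ p hp).2⟩, hpair⟩

section LinearSubst

variable [Fintype σ]

noncomputable def linearSubst (M : Matrix σ σ K) : MvPolynomial σ K →ₐ[K] MvPolynomial σ K :=
  bind₁ fun i => ∑ j, C (M i j) * X j

theorem eval_linearSubst (M : Matrix σ σ K) (H : MvPolynomial σ K) (p : σ → K) :
    eval p (linearSubst M H) = eval (M.mulVec p) H := by
  refine (eval₂Hom_bind₁ _ _ _ H).trans (congrArg (eval · H) ?_)
  ext i
  simp [Matrix.mulVec, dotProduct]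

theorem IsHomogeneous.linearSubst {H : MvPolynomial σ K} {n : ℕ} (hH : H.IsHomogeneous n)
    (M : Matrix σ σ K) : (linearSubst M H).IsHomogeneous n := by
  have := hH.aeval (fun i => ∑ j, C (M i j) * X j) fun i =>
    IsHomogeneous.sum _ _ _ fun j _ => (isHomogeneous_X K j).C_mul (M i j)
  rwa [one_mul, aeval_eq_bind₁] at this

theorem HasProjectiveZeros.of_linearSubst [DecidableEq σ] {M : Matrix σ σ K} (hM : M.det ≠ 0)
    {H : MvPolynomial σ K} {n : ℕ} (h : HasProjectiveZeros (linearSubst M H) n) :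
    HasProjectiveZeros H n := by
  classical
  obtain ⟨Z, hcard, hZ, hpair⟩ := h
  have hinj : Function.Injective M.mulVec :=
    Matrix.mulVec_injective_iff_isUnit.mpr ((Matrix.isUnit_iff_isUnit_det M).mpr hM.isUnit)
  refine ⟨Z.image M.mulVec, (Finset.card_image_of_injective Z hinj).symm ▸ hcard, ?_, ?_⟩
  · simp only [Finset.mem_image]
    rintro _ ⟨p, hp, rfl⟩
    refine ⟨fun h => (hZ p hp).1 (hinj (h.trans (Matrix.mulVec_zero M).symm)), ?_⟩
    rw [← eval_linearSubst]
    exact (hZ p hp).2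
  · simp only [Finset.mem_image]
    rintro _ ⟨p, hp, rfl⟩ _ ⟨q, hq, rfl⟩ hne z h
    refine hpair p hp q hq (fun hpq => hne (hpq ▸ rfl)) z (hinj ?_)
    rw [h, Matrix.mulVec_smul]

end LinearSubst

section BinaryForms

noncomputable def linearFormVanishingAt : (Fin 2 → K) →ₗ[K] MvPolynomial (Fin 2) K where
  toFun p := C (p 1) * X 0 - C (p 0) * X 1
  map_add' p q := by simp only [Pi.add_apply, map_add]; ring
  map_smul' z p := by
    simp only [Pi.smul_apply, smul_eq_mul, map_mul, RingHom.id_apply, smul_sub, smul_eq_C_mul]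
    ring

theorem linearFormVanishingAt_apply (p : Fin 2 → K) :
    linearFormVanishingAt p = C (p 1) * X 0 - C (p 0) * X 1 := rfl

theorem isHomogeneous_linearFormVanishingAt (p : Fin 2 → K) :
    (linearFormVanishingAt p).IsHomogeneous 1 :=
  ((isHomogeneous_X K 0).C_mul _).sub ((isHomogeneous_X K 1).C_mul _)

theorem linearFormVanishingAt_injective :
    Function.Injective (linearFormVanishingAt (K := K)) := by
  intro p q h
  have h0 := congrArg (eval ![0, 1]) h
  have h1 := congrArg (eval ![1, 0]) h
  simp only [linearFormVanishingAt_apply, map_sub, map_mul, eval_C, eval_X] at h0 h1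
  ext i; fin_cases i <;> simp_all

theorem not_isUnit_linearFormVanishingAt (p : Fin 2 → K) :
    ¬ IsUnit (linearFormVanishingAt p) := fun h => by
  simpa [linearFormVanishingAt_apply] using (h.map (eval 0)).ne_zero

theorem IsHomogeneous.linearFormVanishingAt_dvd {H : MvPolynomial (Fin 2) K} {D : ℕ}
    (hH : H.IsHomogeneous D) {p : Fin 2 → K} (hp : p ≠ 0) (h : eval p H = 0) :
    linearFormVanishingAt p ∣ H := by
  -- Modulo `ℓ = p₁X₀ - p₀X₁` we have `pᵢ • (X₀, X₁) = Xᵢ • p`,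
  -- so by homogeneity `pᵢ ^ D • H ≡ Xᵢ ^ D • H(p) = 0`.
  set I := Ideal.span {linearFormVanishingAt p}
  have hπ : Ideal.Quotient.mkₐ K I (linearFormVanishingAt p) = 0 :=
    Ideal.Quotient.eq_zero_iff_mem.mpr (Ideal.subset_span rfl)
  have hrel : ∀ i j, algebraMap K _ (p i) * Ideal.Quotient.mkₐ K I (X j) =
      Ideal.Quotient.mkₐ K I (X i) * algebraMap K _ (p j) := by
    simp only [linearFormVanishingAt_apply, map_sub, map_mul, MvPolynomial.algHom_C] at hπ
    simp only [Fin.forall_fin_two]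
    exact ⟨⟨by ring, by linear_combination -hπ⟩, by linear_combination hπ, by ring⟩
  have hdvd (i : Fin 2) : linearFormVanishingAt p ∣ C (p i) ^ D * H := by
    rw [← Ideal.mem_span_singleton, ← Ideal.Quotient.eq_zero_iff_mem,
      ← Ideal.Quotient.mkₐ_eq_mk K]
    set π := Ideal.Quotient.mkₐ K I
    calc π (C (p i) ^ D * H)
        = MvPolynomial.aeval (fun j => algebraMap K _ (p i) * π (X j)) H := by
          rw [hH.aeval_mul, map_mul, map_pow, algHom_C]
          exact congrArg _ (DFunLike.congr_fun (aeval_unique π) H)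
      _ = MvPolynomial.aeval (fun j => π (X i) * algebraMap K _ (p j)) H := by
          simp only [hrel i]
      _ = π (X i) ^ D * algebraMap K _ (eval p H) := by
          rw [hH.aeval_mul]
          simpa [Function.comp_def] using congrArg (π (X i) ^ D * ·)
            (aeval_algebraMap_apply (B := MvPolynomial (Fin 2) K ⧸ I) p H)
      _ = 0 := by rw [h, map_zero, mul_zero]
  obtain ⟨i, hi⟩ := Function.ne_iff.mp hp
  exact ((hi.isUnit.map C).pow D).dvd_mul_left.mp (hdvd i)

theorem IsHomogeneous.eval_ne_zero_of_coprime {H G : MvPolynomial (Fin 2) K} {D E : ℕ}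
    (hH : H.IsHomogeneous D) (hG : G.IsHomogeneous E)
    (hcop : ∀ l, l ∣ H → l ∣ G → IsUnit l) {p : Fin 2 → K} (hp : p ≠ 0) (h : eval p H = 0) :
    eval p G ≠ 0 := fun hG0 =>
  not_isUnit_linearFormVanishingAt p
    (hcop _ (hH.linearFormVanishingAt_dvd hp h) (hG.linearFormVanishingAt_dvd hp hG0))

theorem HasProjectiveZeros.exists_linearForms {H : MvPolynomial (Fin 2) K} {D n : ℕ}
    (hH : H.IsHomogeneous D) (h : HasProjectiveZeros H n) :
    ∃ S : Finset (MvPolynomial (Fin 2) K), n ≤ S.card ∧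
      (∀ l ∈ S, l.IsHomogeneous 1 ∧ l ∣ H) ∧
      ∀ l₁ ∈ S, ∀ l₂ ∈ S, l₁ ≠ l₂ → ∀ z : K, l₁ ≠ z • l₂ := by
  classical
  obtain ⟨Z, hcard, hZ, hpair⟩ := h
  refine ⟨Z.image linearFormVanishingAt,
    (Finset.card_image_of_injective Z linearFormVanishingAt_injective).symm ▸ hcard, ?_, ?_⟩
  · simp only [Finset.mem_image]
    rintro _ ⟨p, hp, rfl⟩
    exact ⟨isHomogeneous_linearFormVanishingAt p,
      hH.linearFormVanishingAt_dvd (hZ p hp).1 (hZ p hp).2⟩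
  · simp only [Finset.mem_image]
    rintro _ ⟨p, hp, rfl⟩ _ ⟨q, hq, rfl⟩ hne z h
    refine hpair p hp q hq (fun hpq => hne (hpq ▸ rfl)) z (linearFormVanishingAt_injective ?_)
    rw [h, map_smul]

end BinaryForms

section Dehomogenize

open scoped Polynomial

noncomputable def dehomogenize : MvPolynomial (Fin 2) K →ₐ[K] K[X] := aeval ![Polynomial.X, 1]

theorem eval_dehomogenize (H : MvPolynomial (Fin 2) K) (r : K) :
    (dehomogenize H).eval r = eval ![r, 1] H := by
  rw [dehomogenize, aeval_def, polynomial_eval_eval₂]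
  congr 1
  · ext; simp
  · ext i; fin_cases i <;> simp

theorem IsHomogeneous.coeff_dehomogenize {H : MvPolynomial (Fin 2) K} {D : ℕ}
    (hH : H.IsHomogeneous D) : (dehomogenize H).coeff D = eval ![1, 0] H := by
  rw [← Polynomial.eval_one_zero_homogenize, dehomogenize,
    Polynomial.homogenize_eq_of_isHomogeneous hH rfl]

theorem IsHomogeneous.eval_one_zero_eq_zero_or_exists [IsAlgClosed K] {H : MvPolynomial (Fin 2) K}
    {D : ℕ} (hH : H.IsHomogeneous D) (hD : 1 ≤ D) :
    eval ![1, 0] H = 0 ∨ ∃ r, eval ![r, 1] H = 0 := by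
  refine or_iff_not_imp_left.mpr fun hinf => ?_
  have hdeg : D ≤ (dehomogenize H).natDegree :=
    Polynomial.le_natDegree_of_ne_zero (hH.coeff_dehomogenize ▸ hinf)
  obtain ⟨r, hr⟩ := IsAlgClosed.exists_root (dehomogenize H) fun h0 => by
    have := Polynomial.natDegree_eq_zero_iff_degree_le_zero.mpr h0.le
    omega
  exact ⟨r, eval_dehomogenize H r ▸ hr⟩

theorem hasProjectiveZeros_of_eval_one_zero [DecidableEq K] {H : MvPolynomial (Fin 2) K} {n : ℕ}
    (hH : dehomogenize H ≠ 0) (hinf : eval ![1, 0] H = 0)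
    (hn : n ≤ (dehomogenize H).roots.toFinset.card + 1) : HasProjectiveZeros H n := by
  refine ⟨insert ![1, 0] ((dehomogenize H).roots.toFinset.image fun r => ![r, 1]), ?_, ?_, ?_⟩
  · rw [Finset.card_insert_of_notMem, Finset.card_image_of_injective]
    · exact hn
    · intro r s h
      simpa using congrFun h 0
    · simp only [Finset.mem_image, not_exists, not_and]
      intro r _ h
      simpa using congrFun h 1
  · simp only [Finset.mem_insert, Finset.mem_image]
    rintro _ (rfl | ⟨r, hr, rfl⟩)
    · exact ⟨fun h => by simpa using congrFun h 0, hinf⟩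
    · refine ⟨fun h => by simpa using congrFun h 1, ?_⟩
      rw [← eval_dehomogenize]
      exact (Polynomial.mem_roots hH).mp (Multiset.mem_toFinset.mp hr)
  · simp only [Finset.mem_insert, Finset.mem_image]
    rintro _ (rfl | ⟨r, -, rfl⟩) _ (rfl | ⟨s, -, rfl⟩) hne z h
    · exact hne rfl
    · obtain rfl : 0 = z := by simpa using congrFun h 1
      simpa using congrFun h 0
    · simpa using congrFun h 1
    · obtain rfl : 1 = z := by simpa using congrFun h 1
      obtain rfl : r = s := by simpa using congrFun h 0
      exact hne rfl

open UniqueFactorizationMonoid in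
theorem abc_of_eval_one_zero [IsAlgClosed K] [CharZero K]
    {A B C : MvPolynomial (Fin 2) K} {D : ℕ} (hD : 1 ≤ D) (hB : B.IsHomogeneous D)
    (hsum : A + B + C = 0) (hAB : ∀ p ≠ 0, eval p A = 0 → eval p B ≠ 0)
    (hA : eval ![1, 0] A = 0) : HasProjectiveZeros (A * B * C) (D + 2) := by
  classical
  set a := dehomogenize A
  set b := dehomogenize B
  set c := dehomogenize C
  have hsum' : a + b + c = 0 := by simp only [a, b, c, ← map_add, hsum, map_zero]
  have hab : IsCoprime a b := by
    refine (Polynomial.isCoprime_iff_aeval_ne_zero_of_isAlgClosed K K a b).mpr fun r => ?_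
    simp only [Polynomial.coe_aeval_eq_eval, a, b, eval_dehomogenize]
    exact or_iff_not_imp_left.mpr fun h => hAB _ (by simp) (not_not.mp h)
  have hb : D ≤ b.natDegree :=
    Polynomial.le_natDegree_of_ne_zero (hB.coeff_dehomogenize ▸ hAB _ (by simp) hA)
  have hb_not_unit : ¬ IsUnit b := fun h => by
    have := Polynomial.natDegree_eq_zero_of_isUnit h
    omega
  have ha0 : a ≠ 0 := fun h => hb_not_unit (isCoprime_zero_left.mp (h ▸ hab))
  have hb0 : b ≠ 0 := fun h => by
    rw [h, Polynomial.natDegree_zero] at hb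
    omega
  have hc0 : c ≠ 0 := fun h => by
    rw [h, add_zero, add_eq_zero_iff_eq_neg] at hsum'
    rw [hsum', IsCoprime.neg_left_iff, isCoprime_self] at hab
    exact hb_not_unit hab
  have hrad : D + 1 ≤ (radical (a * b * c)).natDegree := by
    rcases Polynomial.abc ha0 hb0 hc0 hab hsum' with ⟨-, h, -⟩ | ⟨-, h, -⟩
    · omega
    · have := Polynomial.derivative_eq_zero.mp h
      omega
  have hABC : dehomogenize (A * B * C) = a * b * c := by rw [map_mul, map_mul]
  have habc0 : a * b * c ≠ 0 := mul_ne_zero (mul_ne_zero ha0 hb0) hc0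
  refine hasProjectiveZeros_of_eval_one_zero (hABC ▸ habc0) (by simp [hA]) ?_
  rw [hABC]
  have := Polynomial.natDegree_radical_le_card_roots_toFinset habc0
  omega

theorem IsHomogeneous.abc [IsAlgClosed K] [CharZero K] {A B C : MvPolynomial (Fin 2) K} {D : ℕ}
    (hD : 1 ≤ D) (hA : A.IsHomogeneous D) (hB : B.IsHomogeneous D) (hsum : A + B + C = 0)
    (hAB : ∀ p ≠ 0, eval p A = 0 → eval p B ≠ 0) : HasProjectiveZeros (A * B * C) (D + 2) := by
  rcases hA.eval_one_zero_eq_zero_or_exists hD with hinf | ⟨r, hr⟩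
  · exact abc_of_eval_one_zero hD hB hsum hAB hinf
  · -- `M` sends `(1, 0)` to the zero `(r, 1)` of `A`
    set M : Matrix (Fin 2) (Fin 2) K := !![r, 1; 1, 0]
    have hM : M.det ≠ 0 := by simp [M, Matrix.det_fin_two]
    refine HasProjectiveZeros.of_linearSubst hM ?_
    rw [map_mul, map_mul]
    refine abc_of_eval_one_zero hD (hB.linearSubst M)
      (by rw [← map_add, ← map_add, hsum, map_zero]) (fun p hp => ?_) ?_
    · simpa only [eval_linearSubst] using
        hAB _ fun h => hp (Matrix.eq_zero_of_mulVec_eq_zero hM h)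
    · have hcol : M.mulVec ![1, 0] = ![r, 1] := by
        ext i
        fin_cases i <;> simp [M]
      rwa [eval_linearSubst, hcol]

end Dehomogenize

end MvPolynomial

theorem three_factor_abc_application (D : ℕ) (hD : 1 ≤ D)
    (X Y : MvPolynomial (Fin 2) ℂ)
    (hX : X.IsHomogeneous D) (hY : Y.IsHomogeneous D)
    (hcop : ∀ p : MvPolynomial (Fin 2) ℂ, p ∣ X → p ∣ Y → IsUnit p)
    (α β γ : ℂ) (hαβ : α ≠ β) (hβγ : β ≠ γ) (hαγ : α ≠ γ) :
    ∃ S : Finset (MvPolynomial (Fin 2) ℂ),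
      D + 2 ≤ S.card ∧
      (∀ l ∈ S, l.IsHomogeneous 1 ∧
        l ∣ (X - C α * Y) * (X - C β * Y) * (X - C γ * Y)) ∧
      (∀ l₁ ∈ S, ∀ l₂ ∈ S, l₁ ≠ l₂ → ∀ z : ℂ, l₁ ≠ z • l₂) := by
  have hform (δ : ℂ) : (X - C δ * Y).IsHomogeneous D := hX.sub (hY.C_mul δ)
  have hβγ' := sub_ne_zero.mpr hβγ
  have hγα' := sub_ne_zero.mpr hαγ.symm
  have hαβ' := sub_ne_zero.mpr hαβ
  have hsum : C (β - γ) * (X - C α * Y) + C (γ - α) * (X - C β * Y) +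
      C (α - β) * (X - C γ * Y) = 0 := by
    simp only [map_sub]
    ring
  have hno_common_zero : ∀ p ≠ 0, eval p (C (β - γ) * (X - C α * Y)) = 0 →
      eval p (C (γ - α) * (X - C β * Y)) ≠ 0 := by
    intro p hp hA hB
    simp only [map_mul, map_sub, eval_C, mul_eq_zero, hβγ', hγα', false_or, sub_eq_zero] at hA hB
    have hY0 : eval p Y = 0 := by
      have h : (α - β) * eval p Y = 0 := by linear_combination hB - hA
      exact (mul_eq_zero.mp h).resolve_left hαβ'
    exact hX.eval_ne_zero_of_coprime hY hcop hp (by rw [hA, hY0, mul_zero]) hY0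
  have hzeros : HasProjectiveZeros ((X - C α * Y) * (X - C β * Y) * (X - C γ * Y)) (D + 2) :=
    (((hform α).C_mul _).abc hD ((hform β).C_mul _) hsum hno_common_zero).mono fun p hp => by
      simpa [hβγ', hγα', hαβ'] using hp
  exact hzeros.exists_linearForms (((hform α).mul (hform β)).mul (hform γ))
end

section
/- Let φ : ℙ¹(ℂ) → ℙ¹(ℂ) be a rational map of degree d ≥ 2 and Δ ≥ 1 an integer. Then there exists a point α ∈ ℙ¹(ℂ) such that φ^(Δ)(φ(α)) = φ(α) but φ^(Δ)(α) ≠ α. -/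
/-!
Put `ψ = φ^[Δ]`. In homogeneous coordinates the composite of two rational maps is again one, of
the product degree, so `ψ = F/G` with `F, G` coprime of degree `D = d ^ Δ ≥ 2`. If the claim
failed, then whenever `ψ x = β` with `β` fixed by `ψ`, following the orbit `x, φ x, …, φ^[Δ] x = β`
backwards would give `x = β`: every fixed point of `ψ` would be its own only preimage.

At a finite fixed point `a` this forces `F - a G = c (X - a) ^ D`, so `(X - a) ^ (D - 1)`
divides the Wronskian `W` of `F` and `G`, and the finite fixed points are simple roots of
`F - X G`. If `∞` is not fixed, there are `D + 1` of them while `deg W ≤ 2D - 2`; if `∞` is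
fixed, `G` has no roots, hence is constant, there are `D` finite fixed points and `deg W < D`.
Either way `#(finite fixed points) · (D - 1) > deg W`, which is impossible.
-/

open Polynomial OnePoint

/-- Evaluation of the rational map f/g (f, g coprime) on ℙ¹(ℂ) = ℂ ∪ {∞}. -/
noncomputable def ratEval (f g : Polynomial ℂ) : OnePoint ℂ → OnePoint ℂ :=
  fun x =>
    match x with
    | OnePoint.infty =>
        if f.degree ≤ g.degree then
          if g.degree ≤ f.degree then ((f.leadingCoeff / g.leadingCoeff : ℂ) : OnePoint ℂ)
          else ((0 : ℂ) : OnePoint ℂ)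
        else OnePoint.infty
    | (a : ℂ) =>
        if g.eval a = 0 then OnePoint.infty
        else ((f.eval a / g.eval a : ℂ) : OnePoint ℂ)

open Function

namespace Polynomial

section Homogenization

variable {K : Type*} [Field K]

def homogEval (h : K[X]) (d : ℕ) (u v : K) : K :=
  ∑ i ∈ Finset.range (d + 1), h.coeff i * u ^ i * v ^ (d - i)

-- With `d = max (deg f) (deg g)`, the map `(f/g) ∘ (p/q)` is
-- `homogComp f p q d / homogComp g p q d`.
noncomputable def homogComp (h p q : K[X]) (d : ℕ) : K[X] :=
  ∑ i ∈ Finset.range (d + 1), C (h.coeff i) * p ^ i * q ^ (d - i)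

theorem homogEval_mul_mul (h : K[X]) (d : ℕ) (t u v : K) :
    homogEval h d (t * u) (t * v) = t ^ d * homogEval h d u v := by
  rw [homogEval, homogEval, Finset.mul_sum]
  refine Finset.sum_congr rfl fun i hi => ?_
  have hid : i + (d - i) = d := by have := Finset.mem_range.mp hi; omega
  rw [mul_pow, mul_pow, show t ^ d = t ^ i * t ^ (d - i) by rw [← pow_add, hid]]
  ring

theorem homogEval_of_ne_zero {h : K[X]} {d : ℕ} (hd : h.natDegree ≤ d) (u : K) {v : K}
    (hv : v ≠ 0) : homogEval h d u v = v ^ d * h.eval (u / v) := by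
  have hsum : homogEval h d (u / v) 1 = h.eval (u / v) := by
    simp [homogEval, eval_eq_sum_range' (Nat.lt_succ_of_le hd)]
  rw [← hsum, ← homogEval_mul_mul, mul_div_cancel₀ _ hv, mul_one]

theorem homogEval_one_right {h : K[X]} {d : ℕ} (hd : h.natDegree ≤ d) (a : K) :
    homogEval h d a 1 = h.eval a := by
  simpa using homogEval_of_ne_zero hd a one_ne_zero

theorem homogEval_zero_right (h : K[X]) (d : ℕ) (u : K) :
    homogEval h d u 0 = h.coeff d * u ^ d := by
  rw [homogEval, Finset.sum_eq_single_of_mem d (Finset.self_mem_range_succ d)]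
  · simp
  · intro i hi hid
    have : d - i ≠ 0 := by have := Finset.mem_range.mp hi; omega
    simp [zero_pow this]

theorem eval_homogComp (h p q : K[X]) (d : ℕ) (a : K) :
    (homogComp h p q d).eval a = homogEval h d (p.eval a) (q.eval a) := by
  simp [homogComp, homogEval, eval_finsetSum]

theorem natDegree_homogComp_le (h : K[X]) {p q : K[X]} {d e : ℕ} (hp : p.natDegree ≤ e)
    (hq : q.natDegree ≤ e) : (homogComp h p q d).natDegree ≤ d * e := by
  refine natDegree_sum_le_of_forall_le _ _ fun i hi => ?_
  have hid : i + (d - i) = d := by have := Finset.mem_range.mp hi; omega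
  calc (C (h.coeff i) * p ^ i * q ^ (d - i)).natDegree
      ≤ (C (h.coeff i) * p ^ i).natDegree + (q ^ (d - i)).natDegree := natDegree_mul_le
    _ ≤ i * e + (d - i) * e := by
        gcongr
        · exact (natDegree_C_mul_le _ _).trans (natDegree_pow_le_of_le i hp)
        · exact natDegree_pow_le_of_le _ hq
    _ = d * e := by rw [← add_mul, hid]

theorem _root_.IsCoprime.coeff_max_natDegree_ne_zero {f g : K[X]} (hfg : IsCoprime f g) :
    f.coeff (max f.natDegree g.natDegree) ≠ 0 ∨ g.coeff (max f.natDegree g.natDegree) ≠ 0 := by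
  wlog h : g.natDegree ≤ f.natDegree generalizing f g
  · simpa [max_comm, or_comm] using this hfg.symm (le_of_not_ge h)
  rw [max_eq_left h]
  by_cases hf : f = 0
  · subst hf
    have hg : g ≠ 0 := by rintro rfl; exact not_isUnit_zero (isCoprime_zero_left.mp hfg)
    right
    rw [natDegree_zero, ← Nat.le_zero.mp (by simpa using h)]
    exact leadingCoeff_ne_zero.mpr hg
  · exact Or.inl (leadingCoeff_ne_zero.mpr hf)

end Homogenization

section Continuity

variable {𝕜 : Type*} [NontriviallyNormedField 𝕜]

theorem continuous_homogEval (h : 𝕜[X]) (d : ℕ) :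
    Continuous fun x : 𝕜 × 𝕜 => homogEval h d x.1 x.2 := by
  unfold homogEval
  fun_prop

theorem homogEval_homogComp (h : 𝕜[X]) {p q : 𝕜[X]} {d e : ℕ}
    (hp : p.natDegree ≤ e) (hq : q.natDegree ≤ e) (u v : 𝕜) :
    homogEval (homogComp h p q d) (d * e) u v
      = homogEval h d (homogEval p e u v) (homogEval q e u v) := by
  suffices (fun v => homogEval (homogComp h p q d) (d * e) u v)
      = fun v => homogEval h d (homogEval p e u v) (homogEval q e u v) from congrFun this v
  refine Continuous.ext_on (dense_compl_singleton 0) ?_ ?_ fun v (hv : v ≠ 0) => ?_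
  · exact (continuous_homogEval _ _).comp (continuous_const.prodMk continuous_id)
  · exact (continuous_homogEval _ _).comp
      (((continuous_homogEval _ _).comp (continuous_const.prodMk continuous_id)).prodMk
        ((continuous_homogEval _ _).comp (continuous_const.prodMk continuous_id)))
  · rw [homogEval_of_ne_zero (natDegree_homogComp_le h hp hq) u hv, eval_homogComp,
      homogEval_of_ne_zero hp u hv, homogEval_of_ne_zero hq u hv, homogEval_mul_mul, pow_mul']

end Continuity

theorem natDegree_wronskian_le {R : Type*} [CommRing R] {a b : R[X]} {n : ℕ}
    (ha : a.natDegree ≤ n) (hb : b.natDegree ≤ n) : (wronskian a b).natDegree ≤ 2 * n - 2 := by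
  rcases Nat.eq_zero_or_pos n with rfl | hn
  · simp [wronskian, derivative_of_natDegree_zero (Nat.le_zero.mp ha),
      derivative_of_natDegree_zero (Nat.le_zero.mp hb)]
  have hda : (derivative a).natDegree ≤ n - 1 := (natDegree_derivative_le a).trans (by omega)
  have hdb : (derivative b).natDegree ≤ n - 1 := (natDegree_derivative_le b).trans (by omega)
  have h2n : 2 * n - 1 = n + (n - 1) := by omega
  refine (natDegree_le_pred (n := 2 * n - 1) ?_ ?_).trans (by omega)
  · exact (natDegree_sub_le_of_le (natDegree_mul_le_of_le ha hdb)
      (natDegree_mul_le_of_le hda hb)).trans (by omega)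
  · rw [wronskian, coeff_sub, h2n, coeff_mul_add_eq_of_natDegree_le ha hdb, add_comm n,
      coeff_mul_add_eq_of_natDegree_le hda hb, coeff_derivative, coeff_derivative,
      Nat.sub_add_cancel hn]
    ring

theorem _root_.IsCoprime.wronskian_ne_zero {K : Type*} [Field K] [CharZero K] {a b : K[X]}
    (hab : IsCoprime a b) (h : 1 ≤ max a.natDegree b.natDegree) : wronskian a b ≠ 0 := by
  rw [Ne, hab.wronskian_eq_zero_iff]
  rintro ⟨ha, hb⟩
  simp [derivative_eq_zero.mp ha, derivative_eq_zero.mp hb] at h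

theorem card_mul_le_natDegree_of_pow_dvd {K : Type*} [Field K] {p : K[X]} (hp : p ≠ 0)
    {s : Finset K} {m : ℕ} (h : ∀ a ∈ s, (X - C a) ^ m ∣ p) : s.card * m ≤ p.natDegree := by
  have hdvd : ∏ a ∈ s, (X - C a) ^ m ∣ p :=
    Finset.prod_dvd_of_coprime
      (fun a _ b _ hab => (pairwise_coprime_X_sub_C injective_id hab).pow) h
  calc s.card * m = (∏ a ∈ s, (X - C a) ^ m).natDegree := by
        rw [natDegree_prod_of_monic _ _ fun a _ => (monic_X_sub_C a).pow m]
        simp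
    _ ≤ p.natDegree := natDegree_le_of_dvd hdvd hp

end Polynomial

section ProjectiveLine

-- `[0 : 0]` is not a point of `ℙ¹`; `projPoint 0 0 = ∞` is a junk value.
noncomputable def projPoint (u v : ℂ) : OnePoint ℂ :=
  if v = 0 then ∞ else ((u / v : ℂ) : OnePoint ℂ)

theorem projPoint_zero_right (u : ℂ) : projPoint u 0 = ∞ := if_pos rfl

theorem projPoint_mul_mul {t : ℂ} (ht : t ≠ 0) (u v : ℂ) :
    projPoint (t * u) (t * v) = projPoint u v := by
  simp [projPoint, ht, mul_div_mul_left _ _ ht]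

theorem projPoint_eq_coe_iff {u v a : ℂ} : projPoint u v = a ↔ v ≠ 0 ∧ u = a * v := by
  by_cases hv : v = 0
  · simp [projPoint, hv]
  · simp [projPoint, hv, div_eq_iff hv]

theorem exists_projPoint_eq (x : OnePoint ℂ) :
    ∃ u v : ℂ, (u ≠ 0 ∨ v ≠ 0) ∧ projPoint u v = x := by
  induction x using OnePoint.rec with
  | infty => exact ⟨1, 0, by simp, projPoint_zero_right 1⟩
  | coe a => exact ⟨a, 1, by simp, by simp [projPoint]⟩

theorem ratEval_coe (f g : ℂ[X]) (a : ℂ) :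
    ratEval f g a = projPoint (f.eval a) (g.eval a) := rfl

variable {f g : ℂ[X]}

theorem ratEval_infty (hfg : IsCoprime f g) :
    ratEval f g ∞
      = projPoint (f.coeff (max f.natDegree g.natDegree))
          (g.coeff (max f.natDegree g.natDegree)) := by
  set d := max f.natDegree g.natDegree
  have hdeg {p : ℂ[X]} (hp : p.natDegree ≤ d) : p.coeff d ≠ 0 ↔ p.degree = d :=
    ⟨degree_eq_of_le_of_coeff_ne_zero (degree_le_of_natDegree_le hp), coeff_ne_zero_of_eq_degree⟩
  have hlt {p : ℂ[X]} (hp : p.natDegree ≤ d) (h0 : p.coeff d = 0) : p.degree < d :=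
    (degree_le_of_natDegree_le hp).lt_of_ne fun h => (hdeg hp).mpr h h0
  have hf : f.natDegree ≤ d := le_max_left _ _
  have hg : g.natDegree ≤ d := le_max_right _ _
  show (if f.degree ≤ g.degree then _ else _) = _
  by_cases hg0 : g.coeff d = 0
  · have hf0 := hfg.coeff_max_natDegree_ne_zero.resolve_right (not_not.mpr hg0)
    rw [(hdeg hf).mp hf0, hg0, projPoint_zero_right, if_neg (not_le.mpr (hlt hg hg0))]
  · rw [(hdeg hg).mp hg0, if_pos (degree_le_of_natDegree_le hf), projPoint, if_neg hg0]
    by_cases hf0 : f.coeff d = 0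
    · rw [if_neg (not_le.mpr (hlt hf hf0)), hf0, zero_div]
    · rw [if_pos ((hdeg hf).mp hf0).ge, leadingCoeff, leadingCoeff,
        natDegree_eq_of_degree_eq_some ((hdeg hf).mp hf0),
        natDegree_eq_of_degree_eq_some ((hdeg hg).mp hg0)]

theorem IsCoprime.homogEval_ne_zero_or (hfg : IsCoprime f g) {u v : ℂ} (huv : u ≠ 0 ∨ v ≠ 0) :
    homogEval f (max f.natDegree g.natDegree) u v ≠ 0 ∨
      homogEval g (max f.natDegree g.natDegree) u v ≠ 0 := by
  by_cases hv : v = 0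
  · have hu : u ^ max f.natDegree g.natDegree ≠ 0 :=
      pow_ne_zero _ (huv.resolve_right (not_not_intro hv))
    simpa [hv, homogEval_zero_right, hu] using hfg.coeff_max_natDegree_ne_zero
  · rw [homogEval_of_ne_zero (le_max_left _ _) u hv,
      homogEval_of_ne_zero (le_max_right _ _) u hv]
    simpa [hv] using aeval_ne_zero_of_isCoprime hfg (u / v)

theorem ratEval_projPoint (hfg : IsCoprime f g) {u v : ℂ} (huv : u ≠ 0 ∨ v ≠ 0) :
    ratEval f g (projPoint u v)
      = projPoint (homogEval f (max f.natDegree g.natDegree) u v)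
          (homogEval g (max f.natDegree g.natDegree) u v) := by
  by_cases hv : v = 0
  · have hu : u ^ max f.natDegree g.natDegree ≠ 0 :=
      pow_ne_zero _ (huv.resolve_right (not_not_intro hv))
    rw [hv, projPoint_zero_right, homogEval_zero_right, homogEval_zero_right, mul_comm,
      mul_comm (g.coeff _), projPoint_mul_mul hu, ratEval_infty hfg]
  · rw [homogEval_of_ne_zero (le_max_left _ _) u hv,
      homogEval_of_ne_zero (le_max_right _ _) u hv, projPoint_mul_mul (pow_ne_zero _ hv),
      projPoint, if_neg hv, ratEval_coe]

end ProjectiveLine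

theorem exists_ratEval_comp {f g p q : ℂ[X]} (hfg : IsCoprime f g) (hpq : IsCoprime p q) :
    ∃ F G : ℂ[X], IsCoprime F G ∧
      max F.natDegree G.natDegree = max f.natDegree g.natDegree * max p.natDegree q.natDegree ∧
      ratEval F G = ratEval f g ∘ ratEval p q := by
  set d := max f.natDegree g.natDegree
  set e := max p.natDegree q.natDegree
  have hp : p.natDegree ≤ e := le_max_left _ _
  have hq : q.natDegree ≤ e := le_max_right _ _
  set F := homogComp f p q d
  set G := homogComp g p q d
  have hF := homogEval_homogComp f hp hq (d := d)
  have hG := homogEval_homogComp g hp hq (d := d)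
  have hne {u v : ℂ} (huv : u ≠ 0 ∨ v ≠ 0) :
      homogEval F (d * e) u v ≠ 0 ∨ homogEval G (d * e) u v ≠ 0 := by
    rw [hF, hG]
    exact hfg.homogEval_ne_zero_or (hpq.homogEval_ne_zero_or huv)
  have hFe : F.natDegree ≤ d * e := natDegree_homogComp_le f hp hq
  have hGe : G.natDegree ≤ d * e := natDegree_homogComp_le g hp hq
  have hcop : IsCoprime F G := by
    refine (isCoprime_iff_aeval_ne_zero_of_isAlgClosed ℂ ℂ F G).mpr fun a => ?_
    simpa [homogEval_one_right hFe, homogEval_one_right hGe] using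
      hne (u := a) (v := 1) (by simp)
  have hdeg : max F.natDegree G.natDegree = d * e := by
    refine le_antisymm (max_le hFe hGe) ?_
    have := hne (u := 1) (v := 0) (by simp)
    simp only [homogEval_zero_right, one_pow, mul_one] at this
    rcases this with h | h
    · exact (le_natDegree_of_ne_zero h).trans (le_max_left _ _)
    · exact (le_natDegree_of_ne_zero h).trans (le_max_right _ _)
  refine ⟨F, G, hcop, hdeg, funext fun x => ?_⟩
  obtain ⟨u, v, huv, rfl⟩ := exists_projPoint_eq x
  rw [comp_apply, ratEval_projPoint hcop huv, hdeg, hF, hG, ratEval_projPoint hpq huv,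
    ratEval_projPoint hfg (hpq.homogEval_ne_zero_or huv)]

theorem ratEval_X_one : ratEval X 1 = id := by
  funext x
  induction x using OnePoint.rec with
  | infty => simp [ratEval]
  | coe a => simp [ratEval]

theorem exists_ratEval_iterate {f g : ℂ[X]} (hfg : IsCoprime f g) (n : ℕ) :
    ∃ F G : ℂ[X], IsCoprime F G ∧
      max F.natDegree G.natDegree = max f.natDegree g.natDegree ^ n ∧
      ratEval F G = (ratEval f g)^[n] := by
  induction n with
  | zero => exact ⟨X, 1, isCoprime_one_right, by simp, ratEval_X_one⟩
  | succ n ih =>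
    obtain ⟨P, Q, hPQ, hdeg, hPQn⟩ := ih
    obtain ⟨F, G, hFG, hFGdeg, hcomp⟩ := exists_ratEval_comp hfg hPQ
    exact ⟨F, G, hFG, by rw [hFGdeg, hdeg, pow_succ'], by rw [hcomp, hPQn, iterate_succ']⟩

theorem Function.exists_isFixedPt_apply_of_isFixedPt_iterate {α : Type*} {φ ψ : α → α} {x : α}
    (k : ℕ) (hk : IsFixedPt ψ (φ^[k] x)) (hx : ¬IsFixedPt ψ x) :
    ∃ a, IsFixedPt ψ (φ a) ∧ ¬IsFixedPt ψ a := by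
  induction k generalizing x with
  | zero => exact absurd hk hx
  | succ k ih =>
    rw [iterate_succ_apply] at hk
    by_cases h : IsFixedPt ψ (φ x)
    · exact ⟨x, h, hx⟩
    · exact ih hk h

-- For a rational map, a point whose fibre is a singleton is totally ramified.
def FixedPtsTotallyRamified {α : Type*} (R : α → α) : Prop :=
  ∀ β x, IsFixedPt R β → R x = β → x = β

section FixedPoints

variable {F G : ℂ[X]}

theorem isFixedPt_ratEval_coe_iff {a : ℂ} :
    IsFixedPt (ratEval F G) a ↔ G.eval a ≠ 0 ∧ F.eval a = a * G.eval a :=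
  projPoint_eq_coe_iff

theorem ratEval_coe_eq_coe_iff (hFG : IsCoprime F G) {x a : ℂ} :
    ratEval F G x = a ↔ F.eval x = a * G.eval x := by
  rw [ratEval_coe, projPoint_eq_coe_iff]
  refine ⟨And.right, fun h => ⟨fun hG => ?_, h⟩⟩
  simpa [h, hG] using aeval_ne_zero_of_isCoprime hFG x

theorem isFixedPt_ratEval_coe_iff_isRoot (hFG : IsCoprime F G) {a : ℂ} :
    IsFixedPt (ratEval F G) a ↔ (F - X * G).IsRoot a := by
  rw [IsFixedPt, ratEval_coe_eq_coe_iff hFG]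
  simp [sub_eq_zero]

theorem pow_dvd_sub_C_mul_of_isFixedPt (hFG : IsCoprime F G)
    (hR : FixedPtsTotallyRamified (ratEval F G)) {a : ℂ} (ha : IsFixedPt (ratEval F G) a) :
    (X - C a) ^ max F.natDegree G.natDegree ∣ F - C a * G := by
  set D := max F.natDegree G.natDegree
  set P := F - C a * G
  -- `∞` is not a preimage of `a`, so `deg P = D`; every root of `P` is a preimage of `a`.
  have hPD : P.coeff D ≠ 0 := by
    intro h
    have hFD : F.coeff D = a * G.coeff D := by simpa [P, sub_eq_zero] using h
    have hGD : G.coeff D ≠ 0 := fun hG =>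
      hFG.coeff_max_natDegree_ne_zero.elim (· (by rw [hFD, hG, mul_zero])) (· hG)
    have hinf : ratEval F G ∞ = a := by
      rw [ratEval_infty hFG, projPoint_eq_coe_iff]
      exact ⟨hGD, hFD⟩
    exact OnePoint.infty_ne_coe a (hR _ _ ha hinf)
  have hP0 : P ≠ 0 := fun h => hPD (by rw [h, coeff_zero])
  have hPdeg : P.natDegree = D :=
    le_antisymm ((natDegree_sub_le _ _).trans (max_le (le_max_left _ _)
      ((natDegree_C_mul_le _ _).trans (le_max_right _ _)))) (le_natDegree_of_ne_zero hPD)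
  have hroots : ∀ x ∈ P.roots, a = x := by
    intro x hx
    have hxa : ratEval F G x = a := by
      rw [ratEval_coe_eq_coe_iff hFG]
      simpa [P, sub_eq_zero] using (mem_roots hP0).mp hx
    exact (OnePoint.coe_injective (hR _ _ ha hxa)).symm
  rw [← hPdeg, ← IsAlgClosed.card_roots_eq_natDegree, ← Multiset.count_eq_card.mpr hroots,
    count_roots]
  exact pow_rootMultiplicity_dvd P a

theorem pow_dvd_wronskian_of_isFixedPt (hFG : IsCoprime F G)
    (hR : FixedPtsTotallyRamified (ratEval F G)) {a : ℂ} (ha : IsFixedPt (ratEval F G) a) :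
    (X - C a) ^ (max F.natDegree G.natDegree - 1) ∣ wronskian F G := by
  have h := pow_dvd_sub_C_mul_of_isFixedPt hFG hR ha
  have hW : wronskian F G = wronskian (F - C a * G) G := by
    simp only [wronskian, derivative_sub, derivative_mul, derivative_C, zero_mul, zero_add]
    ring
  rw [hW, wronskian]
  exact dvd_sub (dvd_mul_of_dvd_left ((pow_dvd_pow _ (Nat.sub_le _ 1)).trans h) _)
    (dvd_mul_of_dvd_left (pow_sub_one_dvd_derivative_of_pow_dvd h) _)

theorem not_isRoot_derivative_sub_X_mul_of_isFixedPt (hFG : IsCoprime F G)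
    (hR : FixedPtsTotallyRamified (ratEval F G)) (hD : 2 ≤ max F.natDegree G.natDegree) {a : ℂ}
    (ha : IsFixedPt (ratEval F G) a) : ¬(derivative (F - X * G)).IsRoot a := by
  have hP' : (derivative (F - C a * G)).IsRoot a := by
    rw [← dvd_iff_isRoot]
    exact (dvd_pow_self _ (by omega)).trans
      (pow_sub_one_dvd_derivative_of_pow_dvd (pow_dvd_sub_C_mul_of_isFixedPt hFG hR ha))
  intro h
  simp only [IsRoot, derivative_sub, derivative_mul, derivative_C, derivative_X, eval_sub,
    eval_add, eval_mul, eval_C, eval_X, zero_mul, zero_add, one_mul] at hP' h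
  exact (isFixedPt_ratEval_coe_iff.mp ha).1 (by linear_combination hP' - h)

theorem natDegree_sub_X_mul_mul_le_natDegree_wronskian (hFG : IsCoprime F G)
    (hR : FixedPtsTotallyRamified (ratEval F G)) (hD : 2 ≤ max F.natDegree G.natDegree) :
    (F - X * G).natDegree * (max F.natDegree G.natDegree - 1) ≤ (wronskian F G).natDegree := by
  set H := F - X * G
  rcases eq_or_ne H 0 with hH | hH
  · simp [hH]
  have hfix {a : ℂ} (ha : a ∈ H.roots) : IsFixedPt (ratEval F G) a :=
    (isFixedPt_ratEval_coe_iff_isRoot hFG).mpr ((mem_roots hH).mp ha)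
  have hnodup : H.roots.Nodup := by
    classical
    refine Multiset.nodup_iff_count_le_one.mpr fun a => ?_
    rw [count_roots]
    by_contra! h
    obtain ⟨hroot, hroot'⟩ := (one_lt_rootMultiplicity_iff_isRoot hH).mp h
    exact not_isRoot_derivative_sub_X_mul_of_isFixedPt hFG hR hD (hfix ((mem_roots hH).mpr hroot))
      hroot'
  rw [← IsAlgClosed.card_roots_eq_natDegree, ← Multiset.toFinset_card_of_nodup hnodup]
  exact card_mul_le_natDegree_of_pow_dvd (hFG.wronskian_ne_zero (by omega)) fun a ha =>
    pow_dvd_wronskian_of_isFixedPt hFG hR (hfix (Multiset.mem_toFinset.mp ha))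

theorem not_fixedPtsTotallyRamified_ratEval (hFG : IsCoprime F G)
    (hD : 2 ≤ max F.natDegree G.natDegree) : ¬FixedPtsTotallyRamified (ratEval F G) := by
  intro hR
  have hcount := natDegree_sub_X_mul_mul_le_natDegree_wronskian hFG hR hD
  set D := max F.natDegree G.natDegree
  by_cases hinf : IsFixedPt (ratEval F G) ∞
  · have hG : G.natDegree = 0 := by
      by_contra h
      obtain ⟨x, hx⟩ := IsAlgClosed.exists_root G fun h' => h (natDegree_eq_of_degree_eq_some h')
      have hx' : ratEval F G x = ∞ := by rw [ratEval_coe, hx.eq_zero, projPoint_zero_right]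
      exact OnePoint.coe_ne_infty x (hR _ _ hinf hx')
    have hH : (F - X * G).natDegree = D := by
      refine (natDegree_sub_eq_left_of_natDegree_lt ?_).trans (by omega)
      exact natDegree_mul_le.trans_lt (by rw [hG]; have := natDegree_X_le (R := ℂ); omega)
    have hW := natDegree_wronskian_lt_add (hFG.wronskian_ne_zero (by omega))
    rw [hH] at hcount
    have hF : F.natDegree ≤ D := le_max_left _ _
    have hDD : D ≤ D * (D - 1) := Nat.le_mul_of_pos_right D (by omega)
    omega
  · have hGD : G.coeff D ≠ 0 := fun h =>
      hinf (by rw [IsFixedPt, ratEval_infty hFG, h, projPoint_zero_right])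
    have hG : G.natDegree = D := le_antisymm (le_max_right _ _) (le_natDegree_of_ne_zero hGD)
    have hG0 : G ≠ 0 := fun h => hGD (by rw [h, coeff_zero])
    have hH : (F - X * G).natDegree = D + 1 := by
      rw [natDegree_sub_eq_right_of_natDegree_lt] <;> rw [natDegree_X_mul hG0, hG]
      exact Nat.lt_succ_of_le (le_max_left _ _)
    have hW := natDegree_wronskian_le (le_max_left F.natDegree G.natDegree)
      (le_max_right F.natDegree G.natDegree)
    rw [hH] at hcount
    have hDD : 2 * (D - 1) < (D + 1) * (D - 1) := Nat.mul_lt_mul_of_pos_right (by omega) (by omega)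
    omega

end FixedPoints

/-- For any rational map φ of degree d ≥ 2 on ℙ¹(ℂ) and any Δ ≥ 1 there is a
point α with φ^(Δ)(φ(α)) = φ(α) but φ^(Δ)(α) ≠ α. -/
theorem exists_preperiodic_not_periodic (f g : Polynomial ℂ)
    (hcop : IsCoprime f g) (h2 : 2 ≤ max f.natDegree g.natDegree)
    (Δ : ℕ) (hΔ : 1 ≤ Δ) :
    ∃ α : OnePoint ℂ,
      (ratEval f g)^[Δ] (ratEval f g α) = ratEval f g α ∧
      (ratEval f g)^[Δ] α ≠ α := by
  obtain ⟨F, G, hFG, hdeg, hψ⟩ := exists_ratEval_iterate hcop Δ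
  have hD : 2 ≤ max F.natDegree G.natDegree := hdeg ▸ h2.trans (Nat.le_self_pow (by omega) _)
  have hR := not_fixedPtsTotallyRamified_ratEval hFG hD
  simp only [FixedPtsTotallyRamified, not_forall] at hR
  obtain ⟨β, x, hβ, hx, hxβ⟩ := hR
  rw [hψ] at hβ hx
  refine exists_isFixedPt_apply_of_isFixedPt_iterate Δ ?_ (fun h => hxβ (h.symm.trans hx))
  rw [IsFixedPt, hx, hβ]
end

section
/- Let q^n be an odd prime power and let φ(t) = (t−1)^q + 1. If x_0 ≥ 2 is an integer, x_{m+1} = φ(x_m), and p is a prime dividing x_{m+n} but not dividing x_{m+j} for any 0 ≤ j < n, then p ≡ 1 (mod q^n). -/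
/-!
Write `a` for the residue of `x m - 1` modulo `p`. Iterating `t ↦ t ^ q` gives
`x (m + r) - 1 = (x m - 1) ^ (q ^ r)`, so the hypotheses say `a ^ (q ^ n) = -1` while
`a ^ (q ^ j) ≠ -1` for `j < n`. Hence `a ^ 2` has order exactly `q ^ n`: otherwise
`a ^ (q ^ (n - 1)) = ±1`, and either sign contradicts one of these. This order divides `p - 1`.
-/

theorem sub_one_eq_pow_pow_of_rec {R : Type*} [Ring R] (q : ℕ) (x : ℕ → R)
    (hrec : ∀ m, x (m + 1) = (x m - 1) ^ q + 1) (m r : ℕ) :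
    x (m + r) - 1 = (x m - 1) ^ (q ^ r) := by
  induction r with
  | zero => simp
  | succ r ih => rw [← add_assoc, hrec, add_sub_cancel_right, ih, ← pow_mul, ← pow_succ]

theorem orderOf_sq_eq_prime_pow_of_pow_eq_neg_one {R : Type*} [Ring R] [NoZeroDivisors R]
    {q : ℕ} [Fact q.Prime] {a : R} {k : ℕ} (hsucc : a ^ q ^ (k + 1) = -1)
    (hk : a ^ q ^ k ≠ -1) : orderOf (a ^ 2) = q ^ (k + 1) := by
  apply orderOf_eq_prime_pow
  · rw [← pow_mul, mul_comm, pow_mul, sq_eq_one_iff]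
    rintro (h | h)
    · apply hk
      rw [← hsucc, pow_succ, pow_mul, h, one_pow]
    · exact hk h
  · rw [← pow_mul, mul_comm, pow_mul, hsucc, neg_one_sq]

theorem prime_pow_dvd_sub_one_of_pow_eq_neg_one {p q : ℕ} [Fact p.Prime] [Fact q.Prime]
    {a : ZMod p} {k : ℕ} (hsucc : a ^ q ^ (k + 1) = -1) (hk : a ^ q ^ k ≠ -1) :
    q ^ (k + 1) ∣ p - 1 := by
  have ha : a ≠ 0 := by
    rintro rfl
    simp [(Fact.out : q.Prime).ne_zero] at hsucc
  rw [← orderOf_sq_eq_prime_pow_of_pow_eq_neg_one hsucc hk]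
  exact ZMod.orderOf_dvd_card_sub_one (pow_ne_zero 2 ha)

theorem primes_one_mod_prime_power_general (q : ℕ) (hq : q.Prime)
    (n : ℕ) (hn : 1 ≤ n) (x : ℕ → ℤ)
    (hrec : ∀ m, x (m + 1) = (x m - 1) ^ q + 1)
    (m : ℕ) (p : ℕ) (hp : p.Prime)
    (hdvd : (p : ℤ) ∣ x (m + n))
    (hprim : ∀ j < n, ¬ (p : ℤ) ∣ x (m + j)) :
    (p : ℤ) ≡ 1 [ZMOD ((q : ℤ) ^ n)] := by
  have := Fact.mk hp
  have := Fact.mk hq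
  have hdvd_iff (r : ℕ) : (p : ℤ) ∣ x (m + r) ↔ ((x m - 1 : ℤ) : ZMod p) ^ q ^ r = -1 := by
    rw [← ZMod.intCast_zmod_eq_zero_iff_dvd, ← Int.cast_pow,
      ← sub_one_eq_pow_pow_of_rec q x hrec, Int.cast_sub, Int.cast_one, sub_eq_neg_self]
  obtain ⟨k, rfl⟩ : ∃ k, n = k + 1 := ⟨n - 1, by omega⟩
  have hqp := prime_pow_dvd_sub_one_of_pow_eq_neg_one ((hdvd_iff _).mp hdvd)
    (mt (hdvd_iff k).mpr (hprim k k.lt_succ_self))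
  exact_mod_cast (Int.natCast_modEq_iff.mpr ((Nat.modEq_iff_dvd' hp.one_le).mpr hqp)).symm

theorem primes_one_mod_prime_power (q : ℕ) (hq : q.Prime) (hodd : Odd q)
    (n : ℕ) (hn : 1 ≤ n) (x : ℕ → ℤ) (hx0 : 2 ≤ x 0)
    (hrec : ∀ m, x (m + 1) = (x m - 1) ^ q + 1)
    (m : ℕ) (p : ℕ) (hp : p.Prime)
    (hdvd : (p : ℤ) ∣ x (m + n))
    (hprim : ∀ j < n, ¬ (p : ℤ) ∣ x (m + j)) :
    (p : ℤ) ≡ 1 [ZMOD ((q : ℤ) ^ n)] :=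
  primes_one_mod_prime_power_general q hq n hn x hrec m p hp hdvd hprim
end

section
/- Let u, v be coprime elements of a principal ideal domain R, and set η = γu − αv for some α, γ ∈ R. Then the ideal (v³ − u³, η·(γv² − αu²)) equals the ideal (v³ − u³, η²). -/
/-!
Write `d = v³ - u³`, `η = γu - αv` and `M = γv² - αu²`. Since `u³ ≡ v³` modulo `d`, one has
`u M ≡ v² η` and `v M ≡ u² η` modulo `d`. Multiplying by `η`, both `u (ηM)` and `v (ηM)` lie in
`(d, η²)`, while `u² η²` and `v² η²` lie in `(d, ηM)`; as `u, v` and hence `u², v²` are coprime,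
`ηM ∈ (d, η²)` and `η² ∈ (d, ηM)`.
-/

theorem Ideal.mem_of_isCoprime_of_mul_mem {R : Type*} [CommRing R] (I : Ideal R) {a b x : R}
    (hab : IsCoprime a b) (ha : a * x ∈ I) (hb : b * x ∈ I) : x ∈ I := by
  obtain ⟨s, t, hst⟩ := hab
  have : x = s * (a * x) + t * (b * x) := by linear_combination -x * hst
  exact this ▸ I.add_mem (I.mul_mem_left s ha) (I.mul_mem_left t hb)

theorem Ideal.span_pair_eq_span_pair_of_mem {R : Type*} [CommRing R] {d x y : R}
    (hx : x ∈ Ideal.span {d, y}) (hy : y ∈ Ideal.span {d, x}) :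
    Ideal.span {d, x} = Ideal.span {d, y} := by
  refine le_antisymm ?_ ?_ <;>
    rw [Ideal.span_le, Set.insert_subset_iff, Set.singleton_subset_iff] <;>
    exact ⟨Ideal.subset_span (Set.mem_insert _ _), ‹_›⟩

theorem ideal_gcd_computation_general (R : Type*) [CommRing R]
    (u v : R) (hcop : IsCoprime u v) (α γ : R) :
    Ideal.span {v ^ 3 - u ^ 3, (γ * u - α * v) * (γ * v ^ 2 - α * u ^ 2)} =
      Ideal.span {v ^ 3 - u ^ 3, (γ * u - α * v) ^ 2} := by
  set d := v ^ 3 - u ^ 3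
  set η := γ * u - α * v
  set M := γ * v ^ 2 - α * u ^ 2
  have hu : u * M - v ^ 2 * η = α * d := by ring
  have hv : v * M - u ^ 2 * η = γ * d := by ring
  apply Ideal.span_pair_eq_span_pair_of_mem
  · refine Ideal.mem_of_isCoprime_of_mul_mem _ hcop ?_ ?_ <;> rw [Ideal.mem_span_pair]
    · exact ⟨α * η, v ^ 2, by linear_combination -η * hu⟩
    · exact ⟨γ * η, u ^ 2, by linear_combination -η * hv⟩
  · refine Ideal.mem_of_isCoprime_of_mul_mem _ (hcop.pow (m := 2) (n := 2)) ?_ ?_ <;>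
      rw [Ideal.mem_span_pair]
    · exact ⟨-(γ * η), v, by linear_combination η * hv⟩
    · exact ⟨-(α * η), u, by linear_combination η * hu⟩

theorem ideal_gcd_computation (R : Type*) [CommRing R] [IsDomain R]
    [IsPrincipalIdealRing R] (u v : R) (hcop : IsCoprime u v) (α γ : R) :
    Ideal.span {v ^ 3 - u ^ 3, (γ * u - α * v) * (γ * v ^ 2 - α * u ^ 2)} =
      Ideal.span {v ^ 3 - u ^ 3, (γ * u - α * v) ^ 2} :=
  ideal_gcd_computation_general R u v hcop α γ
end
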